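/- arXiv:1707.07645 — 2 statements merged into one kernel-verified Lean document; each statement's English description precedes it below -/
import Mathlib

section
/- Let u : ℝ² → ℝ be a C³ solution of u_yy = (u_y + y)·u_xx − u_x·u_xy − 2. Then the function v(x,y) := −2x + y·u_x(x,y) satisfies the linearized equation v_yy = (u_y + y)·v_xx + u_xx·v_y − u_x·v_xy − u_xy·v_x at every point of ℝ². -/
/-- Partial derivative of `f : ℝ² → ℝ` in the direction `v`. -/
noncomputable def pd2 (v : ℝ × ℝ) (f : ℝ × ℝ → ℝ) : ℝ × ℝ → ℝ :=
  fun p => fderiv ℝ f p v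

noncomputable def dx : (ℝ × ℝ → ℝ) → ℝ × ℝ → ℝ := pd2 (1, 0)
noncomputable def dy : (ℝ × ℝ → ℝ) → ℝ × ℝ → ℝ := pd2 (0, 1)

/-!
Differentiating the equation in `x` gives
`u_xyy = (u_y + y) u_xxx − u_x u_xxy` (the two terms `u_xy u_xx` cancel).
For `φ = −2x + y u_x` one has `φ_x = −2 + y u_xx`, `φ_y = u_x + y u_xy`, and hence
`φ_yy = 2 u_xy + y u_xyy`, while the right-hand side of the linearized equation collapses to
`2 u_xy + y ((u_y + y) u_xxx − u_x u_xxy)`. The two agree by the differentiated equation;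
the only analytic input is the symmetry of mixed partials up to order three.
-/

section PartialDerivatives

variable {f g : ℝ × ℝ → ℝ} {p : ℝ × ℝ}

lemma HasFDerivAt.pd2_eq {f' : ℝ × ℝ →L[ℝ] ℝ} (hf : HasFDerivAt f f' p) (v : ℝ × ℝ) :
    pd2 v f p = f' v := by
  rw [pd2, hf.fderiv]

lemma ContDiff.contDiff_pd2 {m n : WithTop ℕ∞} (hf : ContDiff ℝ n f) (hmn : m + 1 ≤ n)
    (v : ℝ × ℝ) :
    ContDiff ℝ m (pd2 v f) :=
  (hf.fderiv_right hmn).clm_apply contDiff_const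

lemma ContDiff.differentiable_pd2 (hf : ContDiff ℝ 2 f) (v : ℝ × ℝ) :
    Differentiable ℝ (pd2 v f) :=
  (hf.contDiff_pd2 (m := 1) (by norm_num) v).differentiable one_ne_zero

lemma fderiv_apply_one_zero : fderiv ℝ f p (1, 0) = dx f p := rfl

lemma pd2_pd2 (hf : ContDiff ℝ 2 f) (v w : ℝ × ℝ) :
    pd2 w (pd2 v f) p = fderiv ℝ (fderiv ℝ f) p w v := by
  have hdf : Differentiable ℝ (fderiv ℝ f) :=
    (hf.fderiv_right (m := 1) (by norm_num)).differentiable one_ne_zero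
  rw [pd2, show pd2 v f = fun q => fderiv ℝ f q v from rfl,
    fderiv_clm_apply (hdf p) (differentiableAt_const v)]
  simp

lemma pd2_comm (hf : ContDiff ℝ 2 f) (v w : ℝ × ℝ) : pd2 w (pd2 v f) = pd2 v (pd2 w f) := by
  funext p
  rw [pd2_pd2 hf, pd2_pd2 hf]
  exact hf.contDiffAt.isSymmSndFDerivAt (by simp) w v

lemma dy_dx_comm (hf : ContDiff ℝ 2 f) : dy (dx f) = dx (dy f) :=
  pd2_comm hf _ _

lemma pd2_add_snd_mul (hg : DifferentiableAt ℝ g p) (hf : DifferentiableAt ℝ f p)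
    (v : ℝ × ℝ) :
    pd2 v (fun q => g q + q.2 * f q) p = pd2 v g p + v.2 * f p + p.2 * pd2 v f p := by
  refine ((hg.hasFDerivAt.add (hasFDerivAt_snd.mul hf.hasFDerivAt)).pd2_eq v).trans ?_
  simp only [add_apply, smul_apply, smul_eq_mul, ContinuousLinearMap.coe_snd', pd2]
  ring

lemma dx_add_snd_mul (hg : DifferentiableAt ℝ g p) (hf : DifferentiableAt ℝ f p) :
    dx (fun q => g q + q.2 * f q) p = dx g p + p.2 * dx f p := by
  simp [dx, pd2_add_snd_mul hg hf]

lemma dy_add_snd_mul (hg : DifferentiableAt ℝ g p) (hf : DifferentiableAt ℝ f p) :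
    dy (fun q => g q + q.2 * f q) p = dy g p + f p + p.2 * dy f p := by
  simp [dy, pd2_add_snd_mul hg hf]

lemma dx_const (c : ℝ) : dx (fun _ => c) p = 0 := by
  simp [dx, pd2]

lemma dx_const_mul_fst (c : ℝ) : dx (fun q => c * q.1) p = c := by
  simp [((hasFDerivAt_fst (p := p)).const_mul c).pd2_eq, dx]

lemma dy_const_mul_fst (c : ℝ) : dy (fun q => c * q.1) p = 0 := by
  simp [((hasFDerivAt_fst (p := p)).const_mul c).pd2_eq, dy]

end PartialDerivatives

lemma dx_dy_dy_of_eq {u : ℝ × ℝ → ℝ} (hu : ContDiff ℝ 3 u)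
    (heq : ∀ p : ℝ × ℝ,
      dy (dy u) p = (dy u p + p.2) * dx (dx u) p - dx u p * dx (dy u) p - 2)
    (p : ℝ × ℝ) :
    dx (dy (dy u)) p = (dy u p + p.2) * dx (dx (dx u)) p - dx u p * dx (dx (dy u)) p := by
  have hux : ContDiff ℝ 2 (dx u) := hu.contDiff_pd2 (by norm_num) _
  have huy : ContDiff ℝ 2 (dy u) := hu.contDiff_pd2 (by norm_num) _
  have hD {f : ℝ × ℝ → ℝ} (hf : Differentiable ℝ f) : HasFDerivAt f (fderiv ℝ f p) p :=
    (hf p).hasFDerivAt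
  have hRHS := ((((hD (f := dy u) (huy.differentiable two_ne_zero)).add hasFDerivAt_snd).mul
    (hD (f := dx (dx u)) (hux.differentiable_pd2 _))).sub
    ((hD (f := dx u) (hux.differentiable two_ne_zero)).mul
      (hD (f := dx (dy u)) (huy.differentiable_pd2 _)))).sub_const 2
  rw [funext heq]
  refine (hRHS.pd2_eq _).trans ?_
  simp only [sub_apply, add_apply, smul_apply, ContinuousLinearMap.coe_snd', smul_eq_mul,
    Pi.add_apply, fderiv_apply_one_zero]
  ring

theorem phi_m1_is_symmetry (u : ℝ × ℝ → ℝ) (hu : ContDiff ℝ 3 u)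
    (heq : ∀ p : ℝ × ℝ,
      dy (dy u) p = (dy u p + p.2) * dx (dx u) p - dx u p * dx (dy u) p - 2) :
    ∀ p : ℝ × ℝ,
      (fun v : ℝ × ℝ → ℝ =>
        dy (dy v) p = (dy u p + p.2) * dx (dx v) p + dx (dx u) p * dy v p
          - dx u p * dx (dy v) p - dx (dy u) p * dx v p)
      (fun q => -2 * q.1 + q.2 * dx u q) := by
  intro p
  have hu2 : ContDiff ℝ 2 u := hu.of_le (by norm_num)
  have hux : ContDiff ℝ 2 (dx u) := hu.contDiff_pd2 (by norm_num) _
  have huy : ContDiff ℝ 2 (dy u) := hu.contDiff_pd2 (by norm_num) _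
  have hx : Differentiable ℝ (dx u) := hux.differentiable two_ne_zero
  have hxx : Differentiable ℝ (dx (dx u)) := hux.differentiable_pd2 _
  have hyx : Differentiable ℝ (dy (dx u)) := hux.differentiable_pd2 _
  have hfst : Differentiable ℝ (fun q : ℝ × ℝ => -2 * q.1) := by fun_prop
  have hφx : dx (fun q => -2 * q.1 + q.2 * dx u q) = fun q => -2 + q.2 * dx (dx u) q :=
    funext fun q => by rw [dx_add_snd_mul (hfst q) (hx q), dx_const_mul_fst]
  have hφy : dy (fun q => -2 * q.1 + q.2 * dx u q) = fun q => dx u q + q.2 * dy (dx u) q :=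
    funext fun q => by rw [dy_add_snd_mul (hfst q) (hx q), dy_const_mul_fst, zero_add]
  rw [hφx, hφy, dx_add_snd_mul (differentiableAt_const _) (hxx p), dx_const,
    dx_add_snd_mul (hx p) (hyx p), dy_add_snd_mul (hx p) (hyx p)]
  rw [dy_dx_comm hu2, dy_dx_comm huy, dx_dy_dy_of_eq hu heq p]
  ring
end

section
/- Let U ⊆ ℝ² be open, let u : U → ℝ be a C² solution of u_yy = (u_y + y)·u_xx − u_x·u_xy − 2, let k ∈ ℝ, and let z, a, b : U → ℝ be functions with z of class C¹ and a, b of class C², satisfying on all of U: a_x = z_y + u_x·z_x, b_x = a_y + u_x·a_x, and b_y = (u_y + y)·a_x − k·z. Then the identity ∂_y(b_y + u_x·b_x) = ∂_x((u_y + y)·b_x − (k+1)·a) holds at every point of U; equivalently, b_yy + u_x·b_xy − (u_y + y)·b_xx + (k+1)·a_x = 0 on U. -/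
/-!
Differentiate the relation for `b_y` in `y` and in `x`, and the relation for `b_x` in `x`.
Substituting these into the left-hand side, the mixed derivatives `a_xy = a_yx` cancel, the
coefficient of `a_x` becomes `u_yy + u_x u_xy - (u_y + y) u_xx + 1 = -1` by equation (2), and the
`z`-terms combine to `-k (z_y + u_x z_x) = -k a_x`; together with `(k + 1) a_x` everything cancels.
-/

open Filter Topology

section PartialDerivatives

variable {f g : ℝ × ℝ → ℝ} {p : ℝ × ℝ}

theorem Filter.EventuallyEq.pd2_eq (h : f =ᶠ[𝓝 p] g) (v : ℝ × ℝ) : pd2 v f p = pd2 v g p := by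
  rw [pd2, pd2, h.fderiv_eq]

theorem pd2_add (hf : DifferentiableAt ℝ f p) (hg : DifferentiableAt ℝ g p) (v : ℝ × ℝ) :
    pd2 v (fun q => f q + g q) p = pd2 v f p + pd2 v g p := by
  simp [pd2, fderiv_fun_add hf hg]

theorem pd2_sub (hf : DifferentiableAt ℝ f p) (hg : DifferentiableAt ℝ g p) (v : ℝ × ℝ) :
    pd2 v (fun q => f q - g q) p = pd2 v f p - pd2 v g p := by
  simp [pd2, fderiv_fun_sub hf hg]

theorem pd2_mul (hf : DifferentiableAt ℝ f p) (hg : DifferentiableAt ℝ g p) (v : ℝ × ℝ) :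
    pd2 v (fun q => f q * g q) p = pd2 v f p * g p + f p * pd2 v g p := by
  simp only [pd2, fderiv_fun_mul hf hg, add_apply, smul_apply, smul_eq_mul]
  ring

theorem pd2_const_mul (c : ℝ) (hf : DifferentiableAt ℝ f p) (v : ℝ × ℝ) :
    pd2 v (fun q => c * f q) p = c * pd2 v f p := by
  simp [pd2, fderiv_const_mul hf]

theorem pd2_snd (v : ℝ × ℝ) : pd2 v Prod.snd p = v.2 := by
  simp [pd2, fderiv_snd]

theorem Filter.EventuallyEq.pd2_eq_of_add_mul {c d e : ℝ × ℝ → ℝ}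
    (h : g =ᶠ[𝓝 p] fun q => c q + d q * e q) (hc : DifferentiableAt ℝ c p)
    (hd : DifferentiableAt ℝ d p) (he : DifferentiableAt ℝ e p) (v : ℝ × ℝ) :
    pd2 v g p = pd2 v c p + pd2 v d p * e p + d p * pd2 v e p := by
  rw [h.pd2_eq, pd2_add hc (hd.fun_mul he), pd2_mul hd he, add_assoc]

theorem Filter.EventuallyEq.pd2_eq_of_add_snd_mul_sub {c e w : ℝ × ℝ → ℝ} {k : ℝ}
    (h : g =ᶠ[𝓝 p] fun q => (c q + q.2) * e q - k * w q) (hc : DifferentiableAt ℝ c p)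
    (he : DifferentiableAt ℝ e p) (hw : DifferentiableAt ℝ w p) (v : ℝ × ℝ) :
    pd2 v g p = (pd2 v c p + v.2) * e p + (c p + p.2) * pd2 v e p - k * pd2 v w p := by
  have hc' : DifferentiableAt ℝ (fun q => c q + q.2) p := hc.fun_add differentiableAt_snd
  rw [h.pd2_eq, pd2_sub (hc'.fun_mul he) (hw.const_mul k), pd2_mul hc' he,
    pd2_add hc differentiableAt_snd, pd2_snd, pd2_const_mul _ hw]

theorem ContDiffAt.differentiableAt_pd2 (hf : ContDiffAt ℝ 2 f p) (v : ℝ × ℝ) :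
    DifferentiableAt ℝ (pd2 v f) p :=
  ((hf.fderiv_right (m := 1) le_rfl).differentiableAt one_ne_zero).clm_apply
    (differentiableAt_const v)

theorem ContDiffAt.pd2_pd2_eq_fderiv_fderiv (hf : ContDiffAt ℝ 2 f p) (v w : ℝ × ℝ) :
    pd2 w (pd2 v f) p = fderiv ℝ (fderiv ℝ f) p w v := by
  have hf' := (hf.fderiv_right (m := 1) le_rfl).differentiableAt one_ne_zero
  change fderiv ℝ (fun q => fderiv ℝ f q v) p w = _
  simp [fderiv_clm_apply hf' (differentiableAt_const v)]

theorem ContDiffAt.pd2_pd2_comm (hf : ContDiffAt ℝ 2 f p) (v w : ℝ × ℝ) :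
    pd2 w (pd2 v f) p = pd2 v (pd2 w f) p := by
  rw [hf.pd2_pd2_eq_fderiv_fderiv, hf.pd2_pd2_eq_fderiv_fderiv]
  exact hf.isSymmSndFDerivAt (by simp [minSmoothness_of_isRCLikeNormedField]) w v

end PartialDerivatives

theorem covering_compatibility_eq2_general (U : Set (ℝ × ℝ)) (hU : IsOpen U)
    (u z a b : ℝ × ℝ → ℝ) (k : ℝ)
    (hu : ContDiffOn ℝ 2 u U) (hz : ContDiffOn ℝ 1 z U)
    (ha : ContDiffOn ℝ 2 a U)
    (hueq : ∀ p ∈ U,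
      dy (dy u) p = (dy u p + p.2) * dx (dx u) p - dx u p * dx (dy u) p - 2)
    (hax : ∀ p ∈ U, dx a p = dy z p + dx u p * dx z p)
    (hbx : ∀ p ∈ U, dx b p = dy a p + dx u p * dx a p)
    (hby : ∀ p ∈ U, dy b p = (dy u p + p.2) * dx a p - k * z p) :
    ∀ p ∈ U,
      dy (dy b) p + dx u p * dx (dy b) p - (dy u p + p.2) * dx (dx b) p
        + (k + 1) * dx a p = 0 := by
  intro p hp
  have hU_nhds : U ∈ 𝓝 p := hU.mem_nhds hp
  have hu' : ContDiffAt ℝ 2 u p := (hu p hp).contDiffAt hU_nhds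
  have ha' : ContDiffAt ℝ 2 a p := (ha p hp).contDiffAt hU_nhds
  have hz' : DifferentiableAt ℝ z p := ((hz p hp).contDiffAt hU_nhds).differentiableAt one_ne_zero
  have hb_y := (eventuallyEq_of_mem hU_nhds hby).pd2_eq_of_add_snd_mul_sub
    (hu'.differentiableAt_pd2 _) (ha'.differentiableAt_pd2 _) hz'
  have hb_yy : dy (dy b) p
      = (dy (dy u) p + 1) * dx a p + (dy u p + p.2) * dy (dx a) p - k * dy z p := hb_y (0, 1)
  have hb_xy : dx (dy b) p
      = (dx (dy u) p + 0) * dx a p + (dy u p + p.2) * dx (dx a) p - k * dx z p := hb_y (1, 0)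
  have hb_xx : dx (dx b) p = dx (dy a) p + dx (dx u) p * dx a p + dx u p * dx (dx a) p :=
    (eventuallyEq_of_mem hU_nhds hbx).pd2_eq_of_add_mul (ha'.differentiableAt_pd2 _)
      (hu'.differentiableAt_pd2 _) (ha'.differentiableAt_pd2 _) _
  have ha_yx : dy (dx a) p = dx (dy a) p := ha'.pd2_pd2_comm (1, 0) (0, 1)
  rw [hb_yy, hb_xy, hb_xx, ha_yx, hueq p hp, hax p hp]
  ring

theorem covering_compatibility_eq2 (U : Set (ℝ × ℝ)) (hU : IsOpen U)
    (u z a b : ℝ × ℝ → ℝ) (k : ℝ)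
    (hu : ContDiffOn ℝ 2 u U) (hz : ContDiffOn ℝ 1 z U)
    (ha : ContDiffOn ℝ 2 a U) (hb : ContDiffOn ℝ 2 b U)
    (hueq : ∀ p ∈ U,
      dy (dy u) p = (dy u p + p.2) * dx (dx u) p - dx u p * dx (dy u) p - 2)
    (hax : ∀ p ∈ U, dx a p = dy z p + dx u p * dx z p)
    (hbx : ∀ p ∈ U, dx b p = dy a p + dx u p * dx a p)
    (hby : ∀ p ∈ U, dy b p = (dy u p + p.2) * dx a p - k * z p) :
    ∀ p ∈ U,
      dy (dy b) p + dx u p * dx (dy b) p - (dy u p + p.2) * dx (dx b) p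
        + (k + 1) * dx a p = 0 :=
  covering_compatibility_eq2_general U hU u z a b k hu hz ha hueq hax hbx hby
end
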